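/- arXiv:1405.4042 — 7 statements merged into one kernel-verified Lean document; each statement's English description precedes it below -/
import Mathlib

section
/- Let a, b, z be real numbers with z ≥ 0, and suppose the 2×2 matrix C = [[a, z],[0, b]] can be written as C = A·B where A and B are positive semidefinite 2×2 complex matrices with operator norms ‖A‖ ≤ 1 and ‖B‖ ≤ 1. Then a, b ∈ [0,1] and z ≤ |√a − √b|·√((1−a)(1−b)). -/
/-!
Write `A = !![p, w; w̄, q]` and `B = !![r, v; v̄, s]`. Positivity of `A`, `1 - A`, `B` and `1 - B`
gives `p, q, r, s ∈ [0, 1]`, `‖w‖² ≤ p q`, `‖w‖² ≤ (1 - p)(1 - q)` and likewise for `v`.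
The vanishing lower-left entry `w̄ r + q v̄ = 0` of `A B` forces `w = q c` and `v = -r c` for a
single `c ∈ ℂ`, whence `a = r (p - q ‖c‖²)`, `b = q (s - r ‖c‖²)` and `z = ‖c‖ |a - b|`.
As `a - b = (√a - √b)(√a + √b)`, it remains to show `‖c‖ (√a + √b) ≤ √((1 - a)(1 - b))`:
each of `‖c‖ √a` and `‖c‖ √b` is bounded by a product of two square roots, and the sum of these
products is bounded by Cauchy–Schwarz.
-/

open scoped ComplexOrder
open ComplexConjugate

namespace Matrix

open scoped MatrixOrder Matrix.Norms.L2Operator in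
lemma PosSemidef.one_sub_of_norm_le_one {n : Type*} [Fintype n] [DecidableEq n]
    {M : Matrix n n ℂ} (hM : M.PosSemidef) (h : ‖toEuclideanCLM (𝕜 := ℂ) M‖ ≤ 1) :
    (1 - M).PosSemidef :=
  le_iff.mp ((CStarAlgebra.norm_le_one_iff_of_nonneg M hM.nonneg).mp h)

lemma IsHermitian.eq_fin_two {M : Matrix (Fin 2) (Fin 2) ℂ} (hM : M.IsHermitian) :
    M = !![((M 0 0).re : ℂ), M 0 1; conj (M 0 1), ((M 1 1).re : ℂ)] := by
  conv_lhs => rw [M.eta_fin_two]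
  rw [Complex.conj_eq_iff_re.mp (hM.apply 0 0), Complex.conj_eq_iff_re.mp (hM.apply 1 1),
    ← hM.apply 1 0]
  rfl

lemma PosSemidef.fin_two_bounds {p q : ℝ} {w : ℂ}
    (h : (!![(p : ℂ), w; conj w, (q : ℂ)]).PosSemidef) : 0 ≤ p ∧ 0 ≤ q ∧ ‖w‖ ^ 2 ≤ p * q := by
  have hp : (0 : ℂ) ≤ p := by simpa using h.diag_nonneg (i := 0)
  have hq : (0 : ℂ) ≤ q := by simpa using h.diag_nonneg (i := 1)
  have hdet := h.det_nonneg
  rw [det_fin_two_of, Complex.mul_conj'] at hdet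
  exact ⟨Complex.zero_le_real.mp hp, Complex.zero_le_real.mp hq,
    by exact_mod_cast sub_nonneg.mp hdet⟩

lemma PosSemidef.exists_eq_fin_two_of_norm_le_one {M : Matrix (Fin 2) (Fin 2) ℂ}
    (hM : M.PosSemidef) (h : ‖toEuclideanCLM (𝕜 := ℂ) M‖ ≤ 1) :
    ∃ (p q : ℝ) (w : ℂ), M = !![(p : ℂ), w; conj w, (q : ℂ)] ∧
      p ∈ Set.Icc (0 : ℝ) 1 ∧ q ∈ Set.Icc (0 : ℝ) 1 ∧ ‖w‖ ^ 2 ≤ p * q ∧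
        ‖w‖ ^ 2 ≤ (1 - p) * (1 - q) := by
  have hM1 := hM.one_sub_of_norm_le_one h
  obtain ⟨p, q, w, rfl⟩ : ∃ (p q : ℝ) (w : ℂ), M = !![(p : ℂ), w; conj w, (q : ℂ)] :=
    ⟨_, _, _, hM.1.eq_fin_two⟩
  have hsub : 1 - !![(p : ℂ), w; conj w, (q : ℂ)] =
      !![((1 - p : ℝ) : ℂ), -w; conj (-w), ((1 - q : ℝ) : ℂ)] := by
    ext i j; fin_cases i <;> fin_cases j <;> simp
  rw [hsub] at hM1
  obtain ⟨hp, hq, hpq⟩ := hM.fin_two_bounds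
  obtain ⟨hp1, hq1, hpq1⟩ := hM1.fin_two_bounds
  exact ⟨p, q, w, rfl, ⟨hp, by linarith⟩, ⟨hq, by linarith⟩, hpq, by simpa using hpq1⟩

lemma fin_two_mul_fin_two_of_offDiag {p q r s : ℝ} (c : ℂ) :
    !![(p : ℂ), q * c; conj (q * c), (q : ℂ)] * !![(r : ℂ), -(r * c); conj (-(r * c)), (s : ℂ)] =
      !![((r * (p - q * ‖c‖ ^ 2) : ℝ) : ℂ), c * ((q * s - p * r : ℝ) : ℂ);
        0, ((q * (s - r * ‖c‖ ^ 2) : ℝ) : ℂ)] := by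
  rw [mul_fin_two]
  push_cast
  simp only [map_neg, map_mul, Complex.conj_ofReal, ← Complex.mul_conj']
  congr 1
  ring_nf

end Matrix

lemma Complex.exists_eq_mul_and_eq_neg_mul {q r : ℝ} {w v : ℂ} (hw : q = 0 → w = 0)
    (hv : r = 0 → v = 0) (h : conj w * r + q * conj v = 0) :
    ∃ c : ℂ, w = q * c ∧ v = -(r * c) := by
  have h' : w * r + q * v = 0 := by simpa using congrArg conj h
  by_cases hq : q = 0
  · by_cases hr : r = 0
    · exact ⟨0, by simp [hw hq], by simp [hv hr]⟩
    · have hr' : (r : ℂ) ≠ 0 := by exact_mod_cast hr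
      exact ⟨-v / r, by simp [hw hq, hq], by field_simp⟩
  · have hq' : (q : ℂ) ≠ 0 := by exact_mod_cast hq
    refine ⟨w / q, by field_simp, ?_⟩
    field_simp
    linear_combination h'

lemma Real.sqrt_mul_sqrt_add_sqrt_mul_sqrt_le {α β γ δ : ℝ} (hα : 0 ≤ α) (hβ : 0 ≤ β)
    (hγ : 0 ≤ γ) (hδ : 0 ≤ δ) :
    √α * √β + √γ * √δ ≤ √(α + γ) * √(β + δ) := by
  rw [← Real.sqrt_mul (show 0 ≤ α + γ by positivity)]
  apply Real.le_sqrt_of_sq_le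
  nlinarith [Real.sq_sqrt hα, Real.sq_sqrt hβ, Real.sq_sqrt hγ, Real.sq_sqrt hδ,
    sq_nonneg (√α * √δ - √γ * √β)]

lemma mul_sqrt_add_sqrt_le {q r x y g : ℝ} (hq : q ∈ Set.Icc (0 : ℝ) 1)
    (hr : r ∈ Set.Icc (0 : ℝ) 1) (hx : x ∈ Set.Icc (0 : ℝ) 1) (hy : y ∈ Set.Icc (0 : ℝ) 1)
    (hg : 0 ≤ g) (hqg : q * g ^ 2 ≤ (1 - q) * (1 - x)) (hrg : r * g ^ 2 ≤ (1 - r) * (1 - y)) :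
    g * (√(r * x) + √(q * y)) ≤ √((1 - r * x) * (1 - q * y)) := by
  obtain ⟨hq0, hq1⟩ := hq
  obtain ⟨hr0, hr1⟩ := hr
  obtain ⟨hx0, hx1⟩ := hx
  obtain ⟨hy0, hy1⟩ := hy
  have hrx : g * √(r * x) ≤ √(x * (1 - r)) * √(1 - y) := by
    rw [← Real.sqrt_sq hg, ← Real.sqrt_mul (sq_nonneg g), ← Real.sqrt_mul (by nlinarith)]
    exact Real.sqrt_le_sqrt (by nlinarith)
  have hqy : g * √(q * y) ≤ √(1 - x) * √(y * (1 - q)) := by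
    rw [← Real.sqrt_sq hg, ← Real.sqrt_mul (sq_nonneg g), ← Real.sqrt_mul (by linarith)]
    exact Real.sqrt_le_sqrt (by nlinarith)
  have hcs := Real.sqrt_mul_sqrt_add_sqrt_mul_sqrt_le (α := x * (1 - r)) (β := 1 - y)
    (γ := 1 - x) (δ := y * (1 - q)) (by nlinarith) (by linarith) (by linarith) (by nlinarith)
  rw [Real.sqrt_mul (show 0 ≤ 1 - r * x by nlinarith)]
  calc g * (√(r * x) + √(q * y)) = g * √(r * x) + g * √(q * y) := mul_add _ _ _
    _ ≤ √(x * (1 - r) + (1 - x)) * √(1 - y + y * (1 - q)) := by linarith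
    _ = √(1 - r * x) * √(1 - q * y) := by ring_nf

lemma mul_abs_sub_le_abs_sqrt_sub_mul {a b g M : ℝ} (ha : 0 ≤ a) (hb : 0 ≤ b)
    (h : g * (√a + √b) ≤ M) : g * |a - b| ≤ |√a - √b| * M := by
  have hab : a - b = (√a - √b) * (√a + √b) := by
    nlinarith [Real.sq_sqrt ha, Real.sq_sqrt hb]
  rw [hab, abs_mul, abs_of_nonneg (by positivity : 0 ≤ √a + √b)]
  calc g * (|√a - √b| * (√a + √b)) = |√a - √b| * (g * (√a + √b)) := by ring
    _ ≤ |√a - √b| * M := mul_le_mul_of_nonneg_left h (abs_nonneg _)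

lemma mem_Icc_and_mul_abs_sub_le {p q r s g a b : ℝ} (hp : p ∈ Set.Icc (0 : ℝ) 1)
    (hq : q ∈ Set.Icc (0 : ℝ) 1) (hr : r ∈ Set.Icc (0 : ℝ) 1) (hs : s ∈ Set.Icc (0 : ℝ) 1)
    (hg : 0 ≤ g) (hpq : (q * g) ^ 2 ≤ p * q) (hpq' : (q * g) ^ 2 ≤ (1 - p) * (1 - q))
    (hrs : (r * g) ^ 2 ≤ r * s) (hrs' : (r * g) ^ 2 ≤ (1 - r) * (1 - s))
    (ha : a = r * (p - q * g ^ 2)) (hb : b = q * (s - r * g ^ 2)) :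
    a ∈ Set.Icc (0 : ℝ) 1 ∧ b ∈ Set.Icc (0 : ℝ) 1 ∧
      g * |a - b| ≤ |√a - √b| * √((1 - a) * (1 - b)) := by
  obtain ⟨hp0, hp1⟩ := hp
  obtain ⟨hq0, hq1⟩ := hq
  obtain ⟨hr0, hr1⟩ := hr
  obtain ⟨hs0, hs1⟩ := hs
  have hx : p - q * g ^ 2 ∈ Set.Icc (0 : ℝ) 1 := ⟨by nlinarith, by nlinarith⟩
  have hy : s - r * g ^ 2 ∈ Set.Icc (0 : ℝ) 1 := ⟨by nlinarith, by nlinarith⟩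
  subst ha hb
  refine ⟨⟨mul_nonneg hr0 hx.1, mul_le_one₀ hr1 hx.1 hx.2⟩,
    ⟨mul_nonneg hq0 hy.1, mul_le_one₀ hq1 hy.1 hy.2⟩, ?_⟩
  exact mul_abs_sub_le_abs_sqrt_sub_mul (mul_nonneg hr0 hx.1) (mul_nonneg hq0 hy.1)
    (mul_sqrt_add_sqrt_le ⟨hq0, hq1⟩ ⟨hr0, hr1⟩ hx hy hg (by nlinarith) (by nlinarith))

/-- If the 2×2 matrix `[[a, z],[0, b]]` (with `z ≥ 0`) equals `A·B` for
positive semidefinite 2×2 complex matrices `A, B` with operator norms at most 1, then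
`a, b ∈ [0,1]` and `z ≤ |√a − √b|·√((1−a)(1−b))`. -/
theorem matrix_product_of_two_positive_contractions_necessity (a b z : ℝ) (hz : 0 ≤ z)
    (A B : Matrix (Fin 2) (Fin 2) ℂ)
    (hA : A.PosSemidef) (hAnorm : ‖Matrix.toEuclideanCLM (𝕜 := ℂ) A‖ ≤ 1)
    (hB : B.PosSemidef) (hBnorm : ‖Matrix.toEuclideanCLM (𝕜 := ℂ) B‖ ≤ 1)
    (hAB : A * B = !![(a : ℂ), (z : ℂ); 0, (b : ℂ)]) :
    a ∈ Set.Icc (0 : ℝ) 1 ∧ b ∈ Set.Icc (0 : ℝ) 1 ∧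
      z ≤ |Real.sqrt a - Real.sqrt b| * Real.sqrt ((1 - a) * (1 - b)) := by
  obtain ⟨p, q, w, rfl, hp, hq, hpq, hpq'⟩ := hA.exists_eq_fin_two_of_norm_le_one hAnorm
  obtain ⟨r, s, v, rfl, hr, hs, hrs, hrs'⟩ := hB.exists_eq_fin_two_of_norm_le_one hBnorm
  have hlower : conj w * r + q * conj v = 0 := by
    simpa [Matrix.mul_fin_two] using congrFun₂ hAB 1 0
  obtain ⟨c, rfl, rfl⟩ := Complex.exists_eq_mul_and_eq_neg_mul
    (fun h ↦ by simpa [h] using hpq) (fun h ↦ by simpa [h] using hrs) hlower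
  rw [Matrix.fin_two_mul_fin_two_of_offDiag] at hAB
  have ha : a = r * (p - q * ‖c‖ ^ 2) := (Complex.ofReal_injective (congrFun₂ hAB 0 0)).symm
  have hb : b = q * (s - r * ‖c‖ ^ 2) := (Complex.ofReal_injective (congrFun₂ hAB 1 1)).symm
  have hzc : c * ((q * s - p * r : ℝ) : ℂ) = z := congrFun₂ hAB 0 1
  have hz' : z = ‖c‖ * |a - b| := by
    rw [← Complex.norm_of_nonneg hz, ← hzc, norm_mul, Complex.norm_real,
      Real.norm_eq_abs, abs_sub_comm, ha, hb]
    ring_nf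
  simp only [norm_mul, norm_neg, Complex.norm_of_nonneg hq.1, Complex.norm_of_nonneg hr.1]
    at hpq hpq' hrs hrs'
  rw [hz']
  exact mem_Icc_and_mul_abs_sub_le hp hq hr hs (norm_nonneg c) hpq hpq' hrs hrs' ha hb
end

section
/- Let S ⊆ [0, ∞), and let a₁₁, a₂₂, a₁₂ : S → ℝ be continuous real-valued functions such that for every z ∈ S the symmetric 2×2 matrix [[a₁₁(z), a₁₂(z)],[a₁₂(z), a₂₂(z)]] is positive semidefinite. Then for every positive bounded operator P on a complex Hilbert space H whose spectrum is contained in S, the block operator [[a₁₁(P), a₁₂(P)],[a₁₂(P), a₂₂(P)]] on H ⊕ H (where a_{ij}(P) is defined by the continuous functional calculus) is a positive operator. -/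
/-!
Perturbing `a₁₁` by `ε > 0` makes the diagonal entry strictly positive, so the pointwise
Cholesky factorization `[[a₁₁ + ε, a₁₂], [a₁₂, a₂₂]] = [[f, 0], [g, h]] [[f, g], [0, h]]`,
with `f = √(a₁₁ + ε)`, `g = a₁₂ / f`, `h = √(a₂₂ - g²)`, has continuous factors on the
spectrum. Applying the functional calculus to them writes `⟪T (u, v), (u, v)⟫ + ε ‖u‖²`
as the sum of squares `‖F u + G v‖² + ‖K v‖²`; letting `ε → 0` gives positivity.
-/

open Filter Topology
open scoped InnerProductSpace

lemma Matrix.PosSemidef.fin_two_diag_nonneg_and_sq_le {a b c : ℝ}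
    (h : (!![a, c; c, b] : Matrix (Fin 2) (Fin 2) ℝ).PosSemidef) :
    0 ≤ a ∧ 0 ≤ b ∧ c ^ 2 ≤ a * b := by
  have hdet := h.det_nonneg
  rw [Matrix.det_fin_two_of] at hdet
  exact ⟨by simpa using h.diag_nonneg (i := 0), by simpa using h.diag_nonneg (i := 1),
    by nlinarith⟩

lemma cholesky_fin_two {a b c ε : ℝ} (ha : 0 ≤ a) (hb : 0 ≤ b) (hc : c ^ 2 ≤ a * b)
    (hε : 0 < ε) :
    √(a + ε) * √(a + ε) = a + ε ∧ √(a + ε) * (c / √(a + ε)) = c ∧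
      c / √(a + ε) * (c / √(a + ε)) +
        √(b - (c / √(a + ε)) ^ 2) * √(b - (c / √(a + ε)) ^ 2) = b := by
  have hpos : 0 < √(a + ε) := Real.sqrt_pos.mpr (by linarith)
  have hsq : √(a + ε) ^ 2 = a + ε := Real.sq_sqrt (by linarith)
  have hg : (c / √(a + ε)) ^ 2 ≤ b := by
    rw [div_pow, hsq, div_le_iff₀ (by linarith)]
    nlinarith
  refine ⟨Real.mul_self_sqrt (by linarith), mul_div_cancel₀ c hpos.ne', ?_⟩
  rw [Real.mul_self_sqrt (by linarith)]
  ring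

lemma nonneg_of_forall_pos_add_mul_nonneg {q r : ℝ} (h : ∀ ε > 0, 0 ≤ q + ε * r) : 0 ≤ q := by
  have hlim : Tendsto (fun ε : ℝ => q + ε * r) (𝓝[>] 0) (𝓝 q) := by
    have hcont : Continuous fun ε : ℝ => q + ε * r := by fun_prop
    simpa using (hcont.continuousWithinAt (s := Set.Ioi 0) (x := 0)).tendsto
  exact ge_of_tendsto hlim (eventually_nhdsWithin_of_forall h)

theorem exists_cfc_add_algebraMap_eq_star_mul_self_fin_two {A : Type*} [TopologicalSpace A]
    [Ring A] [StarRing A] [Algebra ℝ A] [ContinuousFunctionalCalculus ℝ A IsSelfAdjoint]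
    {a : A} (ha : IsSelfAdjoint a) {p q r : ℝ → ℝ}
    (hp : ContinuousOn p (spectrum ℝ a)) (hq : ContinuousOn q (spectrum ℝ a))
    (hr : ContinuousOn r (spectrum ℝ a))
    (hpsd : ∀ z ∈ spectrum ℝ a, (!![p z, q z; q z, r z] : Matrix (Fin 2) (Fin 2) ℝ).PosSemidef)
    {ε : ℝ} (hε : 0 < ε) :
    ∃ f g h : A, cfc p a + algebraMap ℝ A ε = star f * f ∧ cfc q a = star f * g ∧
      cfc r a = star g * g + star h * h := by
  set f : ℝ → ℝ := fun z => √(p z + ε)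
  set g : ℝ → ℝ := fun z => q z / f z
  set h : ℝ → ℝ := fun z => √(r z - g z ^ 2)
  have hentries (z) (hz : z ∈ spectrum ℝ a) := (hpsd z hz).fin_two_diag_nonneg_and_sq_le
  have hfac (z) (hz : z ∈ spectrum ℝ a) := by
    obtain ⟨hpz, hrz, hqz⟩ := hentries z hz
    exact cholesky_fin_two hpz hrz hqz hε
  have hf : ContinuousOn f (spectrum ℝ a) := (hp.add continuousOn_const).sqrt
  have hg : ContinuousOn g (spectrum ℝ a) :=
    hq.div hf fun z hz => (Real.sqrt_pos.mpr (by linarith [(hentries z hz).1])).ne'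
  have hh : ContinuousOn h (spectrum ℝ a) := (hr.sub (hg.pow 2)).sqrt
  have hstar (k : ℝ → ℝ) : star (cfc k a) = cfc k a := (cfc_predicate k a).star_eq
  refine ⟨cfc f a, cfc g a, cfc h a, ?_, ?_, ?_⟩ <;> simp only [hstar]
  · rw [← cfc_const ε a, ← cfc_add a p fun _ => ε, ← cfc_mul f f a]
    exact cfc_congr fun z hz => (hfac z hz).1.symm
  · rw [← cfc_mul f g a]
    exact cfc_congr fun z hz => (hfac z hz).2.1.symm
  · rw [← cfc_mul g g a, ← cfc_mul h h a, ← cfc_add a (fun z => g z * g z) fun z => h z * h z]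
    exact cfc_congr fun z hz => (hfac z hz).2.2.symm

namespace ContinuousLinearMap

lemma re_inner_add_algebraMap_apply_self {E : Type*} [NormedAddCommGroup E]
    [InnerProductSpace ℂ E] (A : E →L[ℂ] E) (ε : ℝ) (u : E) :
    RCLike.re ⟪(A + algebraMap ℝ (E →L[ℂ] E) ε) u, u⟫_ℂ =
      RCLike.re ⟪A u, u⟫_ℂ + ε * ‖u‖ ^ 2 := by
  rw [add_apply, algebraMap_apply, inner_add_left, map_add,
    RCLike.real_smul_eq_coe_smul (K := ℂ), inner_smul_real_left, RCLike.smul_re,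
    inner_self_eq_norm_sq]

variable {𝕜 E : Type*} [RCLike 𝕜] [NormedAddCommGroup E] [InnerProductSpace 𝕜 E]
  [CompleteSpace E]

lemma _root_.IsSelfAdjoint.inner_left_eq_inner_right {A : E →L[𝕜] E} (hA : IsSelfAdjoint A)
    (x y : E) : ⟪A x, y⟫_𝕜 = ⟪x, A y⟫_𝕜 :=
  hA.isSymmetric x y

lemma re_inner_star_mul_self_apply (F : E →L[𝕜] E) (u : E) :
    RCLike.re ⟪(star F * F) u, u⟫_𝕜 = ‖F u‖ ^ 2 := by
  rw [star_eq_adjoint, mul_apply_eq_comp, adjoint_inner_left, inner_self_eq_norm_sq]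

lemma re_inner_cholesky_fin_two (F G K : E →L[𝕜] E) (u v : E) :
    RCLike.re ⟪(star F * F) u, u⟫_𝕜 + 2 * RCLike.re ⟪(star F * G) v, u⟫_𝕜 +
      RCLike.re ⟪(star G * G + star K * K) v, v⟫_𝕜 = ‖F u + G v‖ ^ 2 + ‖K v‖ ^ 2 := by
  rw [add_apply, inner_add_left, map_add, re_inner_star_mul_self_apply,
    re_inner_star_mul_self_apply, re_inner_star_mul_self_apply, star_eq_adjoint,
    mul_apply_eq_comp, adjoint_inner_left, norm_add_sq (𝕜 := 𝕜), inner_re_symm (𝕜 := 𝕜)]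
  ring

section Block

variable {T : WithLp 2 (E × E) →L[𝕜] WithLp 2 (E × E)} {A B C : E →L[𝕜] E}

lemma isSymmetric_of_block (hA : IsSelfAdjoint A) (hB : IsSelfAdjoint B) (hC : IsSelfAdjoint C)
    (hT : ∀ u v : E, T ((WithLp.equiv 2 (E × E)).symm (u, v)) =
      (WithLp.equiv 2 (E × E)).symm (A u + C v, C u + B v)) :
    T.IsSymmetric := by
  intro x y
  have hTx (x : WithLp 2 (E × E)) :
      T x = (WithLp.equiv 2 (E × E)).symm (A x.fst + C x.snd, C x.fst + B x.snd) :=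
    hT x.fst x.snd
  simp only [coe_coe, hTx, WithLp.prod_inner_apply, WithLp.equiv_symm_apply, WithLp.ofLp_fst,
    WithLp.ofLp_snd, inner_add_left, inner_add_right]
  rw [hA.inner_left_eq_inner_right, hB.inner_left_eq_inner_right,
    hC.inner_left_eq_inner_right x.fst, hC.inner_left_eq_inner_right x.snd]
  ring

lemma re_inner_block_apply_self (hC : IsSelfAdjoint C)
    (hT : ∀ u v : E, T ((WithLp.equiv 2 (E × E)).symm (u, v)) =
      (WithLp.equiv 2 (E × E)).symm (A u + C v, C u + B v)) (x : WithLp 2 (E × E)) :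
    RCLike.re ⟪T x, x⟫_𝕜 = RCLike.re ⟪A x.fst, x.fst⟫_𝕜 + 2 * RCLike.re ⟪C x.snd, x.fst⟫_𝕜 +
      RCLike.re ⟪B x.snd, x.snd⟫_𝕜 := by
  have hTx : T x = (WithLp.equiv 2 (E × E)).symm (A x.fst + C x.snd, C x.fst + B x.snd) :=
    hT x.fst x.snd
  rw [hTx, WithLp.prod_inner_apply]
  simp only [WithLp.equiv_symm_apply, WithLp.ofLp_fst, WithLp.ofLp_snd, inner_add_left, map_add]
  rw [hC.inner_left_eq_inner_right x.fst, inner_re_symm (𝕜 := 𝕜) x.fst]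
  ring

end Block

end ContinuousLinearMap

theorem block_operator_positive_of_entrywise_psd_general
    {H : Type*} [NormedAddCommGroup H] [InnerProductSpace ℂ H] [CompleteSpace H]
    (S : Set ℝ)
    (a₁₁ a₂₂ a₁₂ : ℝ → ℝ)
    (h₁₁ : ContinuousOn a₁₁ S) (h₂₂ : ContinuousOn a₂₂ S) (h₁₂ : ContinuousOn a₁₂ S)
    (hpsd : ∀ z ∈ S, (!![a₁₁ z, a₁₂ z; a₁₂ z, a₂₂ z] : Matrix (Fin 2) (Fin 2) ℝ).PosSemidef)
    (P : H →L[ℂ] H) (hP : P.IsPositive) (hspec : spectrum ℝ P ⊆ S)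
    (T : WithLp 2 (H × H) →L[ℂ] WithLp 2 (H × H))
    (hT : ∀ u v : H, T ((WithLp.equiv 2 (H × H)).symm (u, v)) =
        (WithLp.equiv 2 (H × H)).symm
          (cfc a₁₁ P u + cfc a₁₂ P v, cfc a₁₂ P u + cfc a₂₂ P v)) :
    T.IsPositive := by
  have hsa (f : ℝ → ℝ) : IsSelfAdjoint (cfc f P) := cfc_predicate f P
  refine ⟨ContinuousLinearMap.isSymmetric_of_block (hsa a₁₁) (hsa a₂₂) (hsa a₁₂) hT,
    fun x => ?_⟩
  rw [ContinuousLinearMap.reApplyInnerSelf_apply,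
    ContinuousLinearMap.re_inner_block_apply_self (hsa a₁₂) hT]
  refine nonneg_of_forall_pos_add_mul_nonneg (r := ‖x.fst‖ ^ 2) fun ε hε => ?_
  obtain ⟨F, G, K, hFF, hFG, hGK⟩ :=
    exists_cfc_add_algebraMap_eq_star_mul_self_fin_two hP.isSelfAdjoint (h₁₁.mono hspec)
      (h₁₂.mono hspec) (h₂₂.mono hspec) (fun z hz => hpsd z (hspec hz)) hε
  calc 0 ≤ ‖F x.fst + G x.snd‖ ^ 2 + ‖K x.snd‖ ^ 2 := by positivity
    _ = _ := by
      rw [← ContinuousLinearMap.re_inner_cholesky_fin_two, ← hFF, ← hFG, ← hGK,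
        ContinuousLinearMap.re_inner_add_algebraMap_apply_self]
      ring

/-- If `a₁₁, a₂₂, a₁₂` are continuous real functions on `S ⊆ [0,∞)` such that
`[[a₁₁(z), a₁₂(z)],[a₁₂(z), a₂₂(z)]]` is positive semidefinite for all `z ∈ S`, then for every
positive operator `P` with spectrum in `S`, the block operator
`[[a₁₁(P), a₁₂(P)],[a₁₂(P), a₂₂(P)]]` on `H ⊕ H` is positive. -/
theorem block_operator_positive_of_entrywise_psd
    {H : Type*} [NormedAddCommGroup H] [InnerProductSpace ℂ H] [CompleteSpace H]
    (S : Set ℝ) (hS : S ⊆ Set.Ici (0 : ℝ))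
    (a₁₁ a₂₂ a₁₂ : ℝ → ℝ)
    (h₁₁ : ContinuousOn a₁₁ S) (h₂₂ : ContinuousOn a₂₂ S) (h₁₂ : ContinuousOn a₁₂ S)
    (hpsd : ∀ z ∈ S, (!![a₁₁ z, a₁₂ z; a₁₂ z, a₂₂ z] : Matrix (Fin 2) (Fin 2) ℝ).PosSemidef)
    (P : H →L[ℂ] H) (hP : P.IsPositive) (hspec : spectrum ℝ P ⊆ S)
    (T : WithLp 2 (H × H) →L[ℂ] WithLp 2 (H × H))
    (hT : ∀ u v : H, T ((WithLp.equiv 2 (H × H)).symm (u, v)) =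
        (WithLp.equiv 2 (H × H)).symm
          (cfc a₁₁ P u + cfc a₁₂ P v, cfc a₁₂ P u + cfc a₂₂ P v)) :
    T.IsPositive :=
  block_operator_positive_of_entrywise_psd_general S a₁₁ a₂₂ a₁₂ h₁₁ h₂₂ h₁₂ hpsd P hP hspec T hT
end

section
/- Let H and K be complex Hilbert spaces and let T be a bounded operator on H ⊕ K of upper-triangular block form [[T₁, T₃],[0, T₂]] (i.e., T(h, k) = (T₁h + T₃k, T₂k)). If T can be written as a product of two positive contractions on H ⊕ K, then T₁ can be written as a product of two positive contractions on H and T₂ can be written as a product of two positive contractions on K. -/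
/-!
Write `T = A B` with `A`, `B` positive contractions, and let `J` be the inclusion of `H` (resp.
of `K`, after passing to `T† = B A`, for which `K` is invariant). If `T J = J S`, then
`S = (J† R P R J) (J† B J)`, where `R = √A` and `P` is the orthogonal projection onto the closed
span of the range of `R B J`: invariance makes `R (1 - J J†)` map into the orthogonal complement
of that range, so `P R J J† B J = P R B J = R B J`. Both factors are compressions of positive
contractions, hence positive contractions.
-/

open scoped InnerProduct

namespace ContinuousLinearMap

section

variable {𝕜 E F : Type*} [RCLike 𝕜]
  [NormedAddCommGroup E] [InnerProductSpace 𝕜 E] [NormedAddCommGroup F] [InnerProductSpace 𝕜 F]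

def IsPositiveContraction (A : E →L[𝕜] E) : Prop :=
  A.IsPositive ∧ ‖A‖ ≤ 1

def IsProdOfPositiveContractions (T : E →L[𝕜] E) : Prop :=
  ∃ A B : E →L[𝕜] E, A.IsPositiveContraction ∧ B.IsPositiveContraction ∧ T = A ∘L B

theorem isProdOfPositiveContractions_iff (T : E →L[𝕜] E) :
    T.IsProdOfPositiveContractions ↔
      ∃ A B : E →L[𝕜] E, A.IsPositive ∧ ‖A‖ ≤ 1 ∧ B.IsPositive ∧ ‖B‖ ≤ 1 ∧ T = A ∘L B := by
  simp only [IsProdOfPositiveContractions, IsPositiveContraction, and_assoc]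

variable [CompleteSpace E] [CompleteSpace F]

theorem IsPositiveContraction.adjoint_conj {A : E →L[𝕜] E} (hA : A.IsPositiveContraction)
    {J : F →L[𝕜] E} (hJ : ‖J‖ ≤ 1) : (J† ∘L A ∘L J).IsPositiveContraction := by
  refine ⟨hA.1.adjoint_conj J, ?_⟩
  calc ‖J† ∘L A ∘L J‖ ≤ ‖J†‖ * (‖A‖ * ‖J‖) :=
        (opNorm_comp_le _ _).trans (by gcongr; exact opNorm_comp_le _ _)
    _ ≤ 1 := by
        rw [LinearIsometryEquiv.norm_map]
        exact mul_le_one₀ hJ (by positivity) (mul_le_one₀ hA.2 (norm_nonneg _) hJ)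

theorem isPositiveContraction_starProjection (K : Submodule 𝕜 E) [K.HasOrthogonalProjection] :
    K.starProjection.IsPositiveContraction :=
  ⟨.of_isStarProjection isStarProjection_starProjection, K.starProjection_norm_le⟩

theorem norm_le_one_of_adjoint_comp_self_eq_one {J : F →L[𝕜] E} (hJ : J† ∘L J = 1) :
    ‖J‖ ≤ 1 :=
  opNorm_le_bound _ zero_le_one fun x => by
    rw [(norm_map_iff_adjoint_comp_self J).mpr hJ, one_mul]

theorem IsProdOfPositiveContractions.adjoint {T : E →L[𝕜] E}
    (hT : T.IsProdOfPositiveContractions) : (T†).IsProdOfPositiveContractions := by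
  obtain ⟨A, B, hA, hB, rfl⟩ := hT
  exact ⟨B, A, hB, hA, by rw [adjoint_comp, hA.1.isSelfAdjoint.adjoint_eq,
    hB.1.isSelfAdjoint.adjoint_eq]⟩

end

variable {E F : Type*} [NormedAddCommGroup E] [InnerProductSpace ℂ E] [CompleteSpace E]
  [NormedAddCommGroup F] [InnerProductSpace ℂ F] [CompleteSpace F]

theorem IsPositiveContraction.sqrt {A : E →L[ℂ] E} (hA : A.IsPositiveContraction) :
    (CFC.sqrt A).IsPositiveContraction := by
  have hA0 : 0 ≤ A := (nonneg_iff_isPositive A).mpr hA.1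
  refine ⟨(nonneg_iff_isPositive _).mp (CFC.sqrt_nonneg A), ?_⟩
  rw [CFC.norm_sqrt A hA0]
  exact Real.sqrt_le_one.mpr hA.2

theorem IsProdOfPositiveContractions.of_comp_eq_comp {T : E →L[ℂ] E}
    (hT : T.IsProdOfPositiveContractions) {J : F →L[ℂ] E} (hJ : J† ∘L J = 1)
    {S : F →L[ℂ] F} (hTJ : T ∘L J = J ∘L S) : S.IsProdOfPositiveContractions := by
  obtain ⟨A, B, hA, hB, rfl⟩ := hT
  set R := CFC.sqrt A
  have hR : R.IsPositiveContraction := hA.sqrt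
  have hRR : R ∘L R = A := CFC.sqrt_mul_sqrt_self A ((nonneg_iff_isPositive A).mpr hA.1)
  have hRadj : R† = R := hR.1.isSelfAdjoint.adjoint_eq
  have hker : (R ∘L B ∘L J)† ∘L R ∘L (1 - J ∘L J†) = 0 := by
    calc (R ∘L B ∘L J)† ∘L R ∘L (1 - J ∘L J†)
        = ((R ∘L R) ∘L B ∘L J)† ∘L (1 - J ∘L J†) := by
          simp only [adjoint_comp, hRadj, comp_assoc]
      _ = S† ∘L (J† - (J† ∘L J) ∘L J†) := by
          rw [hRR, ← comp_assoc, hTJ, adjoint_comp]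
          simp only [comp_sub, one_def, comp_id, comp_assoc]
      _ = 0 := by rw [hJ, one_def, id_comp, sub_self, comp_zero]
  have hN (u : E) : R (u - J ((J†) u)) ∈ (R ∘L B ∘L J).rangeᗮ := by
    rw [orthogonal_range, LinearMap.mem_ker]
    simpa using congr($hker u)
  set P := (R ∘L B ∘L J).rangeᗮᗮ.starProjection
  have hPR (u : E) : P (R (J ((J†) u))) = P (R u) := by
    rw [eq_comm, ← sub_eq_zero, ← map_sub, ← map_sub, Submodule.starProjection_apply_eq_zero_iff]
    exact Submodule.le_orthogonal_orthogonal _ (hN u)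
  have hPRBJ (x : F) : P (R (B (J x))) = R (B (J x)) :=
    Submodule.starProjection_eq_self_iff.mpr (Submodule.le_orthogonal_orthogonal _ ⟨x, rfl⟩)
  refine ⟨J† ∘L (R† ∘L P ∘L R) ∘L J, J† ∘L B ∘L J,
    ((isPositiveContraction_starProjection _).adjoint_conj hR.2).adjoint_conj
      (norm_le_one_of_adjoint_comp_self_eq_one hJ),
    hB.adjoint_conj (norm_le_one_of_adjoint_comp_self_eq_one hJ), ?_⟩
  ext x
  have hJJ := congr($hJ (S x))
  have hABJ := congr($hTJ x)
  simp only [coe_comp, Function.comp_apply, one_apply_eq_self] at hJJ hABJ ⊢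
  rw [hPR, hPRBJ, hRadj, ← comp_apply R R, hRR, hABJ, hJJ]

end ContinuousLinearMap

namespace WithLp

open scoped ENNReal

variable (p : ℝ≥0∞) [Fact (1 ≤ p)] (𝕜 E F : Type*) [NormedField 𝕜]
  [SeminormedAddCommGroup E] [NormedSpace 𝕜 E] [SeminormedAddCommGroup F] [NormedSpace 𝕜 F]

noncomputable def inlₗᵢ : E →ₗᵢ[𝕜] WithLp p (E × F) where
  toLinearMap := (WithLp.linearEquiv p 𝕜 (E × F)).symm.toLinearMap ∘ₗ LinearMap.inl 𝕜 E F
  norm_map' := norm_toLp_fst p E F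

noncomputable def inrₗᵢ : F →ₗᵢ[𝕜] WithLp p (E × F) where
  toLinearMap := (WithLp.linearEquiv p 𝕜 (E × F)).symm.toLinearMap ∘ₗ LinearMap.inr 𝕜 E F
  norm_map' := norm_toLp_snd p E F

@[simp]
theorem inlₗᵢ_apply (x : E) : inlₗᵢ p 𝕜 E F x = toLp p (x, 0) := rfl

@[simp]
theorem inrₗᵢ_apply (y : F) : inrₗᵢ p 𝕜 E F y = toLp p (0, y) := rfl

end WithLp

open ContinuousLinearMap

/-- If an upper-triangular block operator `[[T₁, T₃],[0, T₂]]` on `H ⊕ K`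
is a product of two positive contractions, then so are `T₁` (on `H`) and `T₂` (on `K`). -/
theorem diagonal_blocks_product_of_two_positive_contractions
    {H K : Type*} [NormedAddCommGroup H] [InnerProductSpace ℂ H] [CompleteSpace H]
    [NormedAddCommGroup K] [InnerProductSpace ℂ K] [CompleteSpace K]
    (T₁ : H →L[ℂ] H) (T₂ : K →L[ℂ] K) (T₃ : K →L[ℂ] H)
    (T : WithLp 2 (H × K) →L[ℂ] WithLp 2 (H × K))
    (hT : ∀ (h : H) (k : K), T ((WithLp.equiv 2 (H × K)).symm (h, k)) =
        (WithLp.equiv 2 (H × K)).symm (T₁ h + T₃ k, T₂ k))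
    (hfact : ∃ A B : WithLp 2 (H × K) →L[ℂ] WithLp 2 (H × K),
        A.IsPositive ∧ ‖A‖ ≤ 1 ∧ B.IsPositive ∧ ‖B‖ ≤ 1 ∧ T = A ∘L B) :
    (∃ A₁ B₁ : H →L[ℂ] H, A₁.IsPositive ∧ ‖A₁‖ ≤ 1 ∧ B₁.IsPositive ∧ ‖B₁‖ ≤ 1 ∧
        T₁ = A₁ ∘L B₁) ∧
    (∃ A₂ B₂ : K →L[ℂ] K, A₂.IsPositive ∧ ‖A₂‖ ≤ 1 ∧ B₂.IsPositive ∧ ‖B₂‖ ≤ 1 ∧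
        T₂ = A₂ ∘L B₂) := by
  simp only [← isProdOfPositiveContractions_iff] at hfact ⊢
  set iH := (WithLp.inlₗᵢ 2 ℂ H K).toContinuousLinearMap
  set iK := (WithLp.inrₗᵢ 2 ℂ H K).toContinuousLinearMap
  have hH : T ∘L iH = iH ∘L T₁ := by
    ext h
    simpa [iH] using hT h 0
  have hK : T† ∘L iK = iK ∘L T₂† := by
    ext k
    refine ext_inner_left ℂ fun v => ?_
    rcases v with ⟨h, k'⟩
    simpa [iK, adjoint_inner_right] using congr(inner ℂ $(hT h k') (WithLp.toLp 2 (0, k)))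
  refine ⟨hfact.of_comp_eq_comp (LinearIsometry.adjoint_comp_self _) hH, ?_⟩
  simpa using (hfact.adjoint.of_comp_eq_comp (LinearIsometry.adjoint_comp_self _) hK).adjoint
end

section
/- The 2×2 matrix C = (1/25)·[[9, 3],[0, 16]] cannot be written as a product A·B of two positive semidefinite 2×2 complex matrices A, B each of operator norm at most 1. -/
/-!
Since `A` and `B` are self-adjoint, `C = A * B` has `Cᴴ = B * A`, so `C * A = A * Cᴴ` and
`B * C = Cᴴ * B`. For an upper triangular real `C = !![a, b; 0, d]` with `a ≠ d` these
linear equations force `A` and `B` to be real with `(d - a) A₀₁ = b A₁₁` and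
`(d - a) B₀₁ = -b B₀₀`; here `A₀₁ = 3r/7` and `B₀₁ = -3s/7` with `r = A₁₁ ≥ 0`, `s = B₀₀ ≥ 0`.
Testing `1 - A ≥ 0` on `(3, 2)` and `1 - B ≥ 0` on `(-1, 2)`, and eliminating `A₀₀` and `B₁₁`
with the diagonal of `A * B = C`, gives `13 s ≥ 81/25 + 529 rs/49` and
`5 r ≥ 64/25 + 169 rs/49`. Multiplying,
`65 rs ≥ (72/25 + 299 rs/49)² ≥ 4 (72/25) (299/49) rs > 65 rs`, impossible for `rs ≥ 0`.
-/

open scoped ComplexOrder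
open Matrix

lemma IsSelfAdjoint.mul_mul_self_eq_mul_star {R : Type*} [Semigroup R] [StarMul R] {a b : R}
    (ha : IsSelfAdjoint a) (hb : IsSelfAdjoint b) : a * b * a = a * star (a * b) := by
  rw [star_mul, ha.star_eq, hb.star_eq, mul_assoc]

lemma IsSelfAdjoint.mul_mul_self_eq_star_mul {R : Type*} [Semigroup R] [StarMul R] {a b : R}
    (ha : IsSelfAdjoint a) (hb : IsSelfAdjoint b) : b * (a * b) = star (a * b) * b := by
  rw [star_mul, ha.star_eq, hb.star_eq, mul_assoc]

open scoped Matrix.Norms.L2Operator MatrixOrder in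
lemma Matrix.PosSemidef.one_sub_of_norm_le_one_s8 {n : Type*} [Fintype n] [DecidableEq n]
    {A : Matrix n n ℂ} (hA : A.PosSemidef) (h : ‖toEuclideanCLM (𝕜 := ℂ) A‖ ≤ 1) :
    (1 - A).PosSemidef :=
  (CStarAlgebra.norm_le_one_iff_of_nonneg A hA.nonneg).mp h

lemma Matrix.PosSemidef.re_quadForm_fin_two_nonneg {M : Matrix (Fin 2) (Fin 2) ℂ}
    (hM : M.PosSemidef) (x y : ℝ) :
    0 ≤ x ^ 2 * (M 0 0).re + x * y * ((M 0 1).re + (M 1 0).re) + y ^ 2 * (M 1 1).re := by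
  have h := Complex.nonneg_iff.mp (hM.dotProduct_mulVec_nonneg ![(x : ℂ), y])
  simp only [dotProduct, Pi.star_apply, RCLike.star_def, mulVec, Fin.sum_univ_two, Fin.isValue,
    cons_val_zero, cons_val_one, cons_val_fin_one, Complex.conj_ofReal, Complex.add_re,
    Complex.mul_re, Complex.ofReal_re, Complex.ofReal_im, mul_zero, sub_zero, zero_mul] at h
  linarith [h.1]

section Intertwining

variable {a b d : ℝ}

lemma Matrix.IsHermitian.eq_real_of_mul_eq_mul_conjTranspose {A : Matrix (Fin 2) (Fin 2) ℂ}
    (hA : A.IsHermitian) (had : a ≠ d)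
    (h : !![(a : ℂ), b; 0, d] * A = A * !![(a : ℂ), b; 0, d]ᴴ) :
    ∃ p q r : ℝ, A = !![(p : ℂ), q; q, r] ∧ (d - a) * q = b * r := by
  have hda : d - a ≠ 0 := sub_ne_zero.mpr had.symm
  have h01 : A 0 1 = b * A 1 1 / (d - a) := by
    have e := congrFun (congrFun h 0) 1
    simp only [Fin.isValue, mul_apply, of_apply, cons_val', cons_val_fin_one, cons_val_zero,
      Fin.sum_univ_two, cons_val_one, conjTranspose_apply, RCLike.star_def, map_zero, mul_zero,
      Complex.conj_ofReal, zero_add] at e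
    field_simp [sub_ne_zero.mpr (Complex.ofReal_injective.ne had.symm)]
    linear_combination -e
  have h10 : A 1 0 = b * A 1 1 / (d - a) := by
    rw [← hA.apply 1 0, h01, star_div₀, star_mul', star_sub, hA.apply 1 1]
    simp
  have hre (i : Fin 2) : ((A i i).re : ℂ) = A i i := hA.coe_re_apply_self i
  refine ⟨(A 0 0).re, b * (A 1 1).re / (d - a), (A 1 1).re, ?_, by field_simp⟩
  ext i j
  fin_cases i <;> fin_cases j <;> simp [h01, h10, hre]

lemma Matrix.IsHermitian.eq_real_of_mul_eq_conjTranspose_mul {B : Matrix (Fin 2) (Fin 2) ℂ}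
    (hB : B.IsHermitian) (had : a ≠ d)
    (h : B * !![(a : ℂ), b; 0, d] = !![(a : ℂ), b; 0, d]ᴴ * B) :
    ∃ s t u : ℝ, B = !![(s : ℂ), t; t, u] ∧ (d - a) * t = -(b * s) := by
  have hda : d - a ≠ 0 := sub_ne_zero.mpr had.symm
  have h01 : B 0 1 = -(b * B 0 0 / (d - a)) := by
    have e := congrFun (congrFun h 0) 1
    simp only [Fin.isValue, mul_apply, of_apply, cons_val', cons_val_one, cons_val_fin_one,
      Fin.sum_univ_two, cons_val_zero, conjTranspose_apply, RCLike.star_def, Complex.conj_ofReal,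
      map_zero, zero_mul, add_zero] at e
    field_simp [sub_ne_zero.mpr (Complex.ofReal_injective.ne had.symm)]
    linear_combination e
  have h10 : B 1 0 = -(b * B 0 0 / (d - a)) := by
    rw [← hB.apply 1 0, h01, star_neg, star_div₀, star_mul', star_sub, hB.apply 0 0]
    simp
  have hre (i : Fin 2) : ((B i i).re : ℂ) = B i i := hB.coe_re_apply_self i
  refine ⟨(B 0 0).re, -(b * (B 0 0).re / (d - a)), (B 1 1).re, ?_, by field_simp⟩
  ext i j
  fin_cases i <;> fin_cases j <;> simp [h01, h10, hre]

end Intertwining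

lemma false_of_contraction_constraints {p q r s t u : ℝ} (hr : 0 ≤ r) (hs : 0 ≤ s)
    (hq : 7 * q = 3 * r) (ht : 7 * t = -(3 * s))
    (h00 : p * s + q * t = 9 / 25) (h11 : q * t + r * u = 16 / 25)
    (hA : 0 ≤ 9 * (1 - p) - 12 * q + 4 * (1 - r)) (hB : 0 ≤ (1 - s) + 4 * t + 4 * (1 - u)) :
    False := by
  have hs' : 81 / 25 + 529 / 49 * (r * s) ≤ 13 * s := by nlinarith [mul_nonneg hs hA]
  have hr' : 64 / 25 + 169 / 49 * (r * s) ≤ 5 * r := by nlinarith [mul_nonneg hr hB]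
  have := mul_le_mul hr' hs' (by positivity) (by positivity)
  nlinarith [sq_nonneg (72 / 25 - 299 / 49 * (r * s)), mul_nonneg hr hs]

/-- The matrix `(1/25)·[[9, 3],[0, 16]]` is not a product of two positive
semidefinite 2×2 complex matrices each of operator norm at most 1. -/
theorem example_matrix_not_product_of_two_positive_contractions :
    ¬ ∃ A B : Matrix (Fin 2) (Fin 2) ℂ,
        A.PosSemidef ∧ ‖Matrix.toEuclideanCLM (𝕜 := ℂ) A‖ ≤ 1 ∧
        B.PosSemidef ∧ ‖Matrix.toEuclideanCLM (𝕜 := ℂ) B‖ ≤ 1 ∧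
        A * B = (1 / 25 : ℂ) • !![9, 3; 0, 16] := by
  rintro ⟨A, B, hA, hnA, hB, hnB, hAB⟩
  have hC : (1 / 25 : ℂ) • !![9, 3; 0, 16] =
      !![((9 / 25 : ℝ) : ℂ), (3 / 25 : ℝ); 0, (16 / 25 : ℝ)] := by
    ext i j; fin_cases i <;> fin_cases j <;> norm_num
  rw [hC] at hAB
  have hCA := hA.isHermitian.isSelfAdjoint.mul_mul_self_eq_mul_star hB.isHermitian.isSelfAdjoint
  have hBC := hA.isHermitian.isSelfAdjoint.mul_mul_self_eq_star_mul hB.isHermitian.isSelfAdjoint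
  rw [hAB, star_eq_conjTranspose] at hCA hBC
  obtain ⟨p, q, r, rfl, hq⟩ :=
    hA.isHermitian.eq_real_of_mul_eq_mul_conjTranspose (by norm_num) hCA
  obtain ⟨s, t, u, rfl, ht⟩ :=
    hB.isHermitian.eq_real_of_mul_eq_conjTranspose_mul (by norm_num) hBC
  have hr : 0 ≤ r := by simpa using hA.diag_nonneg (i := 1)
  have hs : 0 ≤ s := by simpa using hB.diag_nonneg (i := 0)
  have h00 : p * s + q * t = 9 / 25 := by
    simpa [mul_apply] using congrArg Complex.re (congrFun (congrFun hAB 0) 0)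
  have h11 : q * t + r * u = 16 / 25 := by
    simpa [mul_apply] using congrArg Complex.re (congrFun (congrFun hAB 1) 1)
  have hLA := (hA.one_sub_of_norm_le_one_s8 hnA).re_quadForm_fin_two_nonneg 3 2
  have hLB := (hB.one_sub_of_norm_le_one_s8 hnB).re_quadForm_fin_two_nonneg (-1) 2
  simp only [Fin.isValue, Matrix.sub_apply, one_apply_eq, one_apply_ne, ne_eq, zero_ne_one,
    one_ne_zero, not_false_eq_true, of_apply, cons_val', cons_val_zero, cons_val_one, cons_val_fin_one,
    Complex.sub_re, Complex.one_re, Complex.zero_re, Complex.ofReal_re] at hLA hLB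
  exact false_of_contraction_constraints hr hs (by linarith) (by linarith) h00 h11
    (by linarith) (by linarith)
end

section
/- Let A and B be positive bounded operators on a complex Hilbert space H. Then the spectrum of the product AB is contained in [0, ∞) (viewing the spectrum as a subset of ℂ, every point of σ(AB) is a nonnegative real number). -/
open ComplexOrder

/-- With `s = √a`, the product `a * b = s * (s * b)` has the same nonzero spectrum as the
positive element `s * b * s`. -/
lemma spectrum_mul_nonneg_of_nonneg {A : Type*} [CStarAlgebra A] [PartialOrder A]
    [StarOrderedRing A] {a b : A} (ha : 0 ≤ a) (hb : 0 ≤ b) {z : ℂ}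
    (hz : z ∈ spectrum ℂ (a * b)) : 0 ≤ z := by
  obtain rfl | hz0 := eq_or_ne z 0
  · exact le_rfl
  set s := CFC.sqrt a
  have hconj : 0 ≤ s * b * s := by
    have := star_left_conjugate_nonneg hb s
    rwa [(CFC.sqrt_nonneg a).isSelfAdjoint.star_eq] at this
  have hz' : z ∈ spectrum ℂ (s * (s * b)) \ {0} :=
    ⟨by rwa [← mul_assoc, CFC.sqrt_mul_sqrt_self a ha], hz0⟩
  rw [spectrum.nonzero_mul_comm] at hz'
  exact spectrum_nonneg_of_nonneg hconj hz'.1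

/-- If `A` and `B` are positive bounded operators on a complex Hilbert
space, then every point of the spectrum of `AB` is a nonnegative real number. -/
theorem spectrum_product_of_positives_nonneg
    {H : Type*} [NormedAddCommGroup H] [InnerProductSpace ℂ H] [CompleteSpace H]
    (A B : H →L[ℂ] H) (hA : A.IsPositive) (hB : B.IsPositive) :
    spectrum ℂ (A ∘L B) ⊆ {z : ℂ | 0 ≤ z.re ∧ z.im = 0} := by
  intro z hz
  rw [← ContinuousLinearMap.nonneg_iff_isPositive] at hA hB
  have hz_nonneg : 0 ≤ z := spectrum_mul_nonneg_of_nonneg hA hB hz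
  exact ⟨hz_nonneg.1, hz_nonneg.2.symm⟩
end

section
/- Let a, b, z be real numbers with 0 < a < b < 1 and 0 ≤ z ≤ (√b − √a)·√((1−a)(1−b)). Then a + b − z²/((1−a)(1−b)) ≥ 2√(ab), the quadratic equation λ² − (a + b − z²/((1−a)(1−b)))·λ + ab = 0 has two real roots λ₁ ≥ λ₂, and these roots satisfy a ≤ λ₂ ≤ λ₁ ≤ b. -/
set_option maxHeartbeats 1000000 in
/-- For `0 < a < b < 1` and `0 ≤ z ≤ (√b − √a)·√((1−a)(1−b))`, one has
`a + b − z²/((1−a)(1−b)) ≥ 2√(ab)`; the quadratic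
`λ² − (a + b − z²/((1−a)(1−b)))·λ + ab = 0` has two real roots `λ₁ ≥ λ₂`, and these
roots satisfy `a ≤ λ₂ ≤ λ₁ ≤ b`. -/
theorem quadratic_roots_location (a b z : ℝ) (ha : 0 < a) (hab : a < b) (hb : b < 1)
    (hz0 : 0 ≤ z)
    (hz : z ≤ (Real.sqrt b - Real.sqrt a) * Real.sqrt ((1 - a) * (1 - b))) :
    2 * Real.sqrt (a * b) ≤ a + b - z ^ 2 / ((1 - a) * (1 - b)) ∧
    ∃ lam₁ lam₂ : ℝ, lam₂ ≤ lam₁ ∧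
      lam₁ ^ 2 - (a + b - z ^ 2 / ((1 - a) * (1 - b))) * lam₁ + a * b = 0 ∧
      lam₂ ^ 2 - (a + b - z ^ 2 / ((1 - a) * (1 - b))) * lam₂ + a * b = 0 ∧
      (∀ lam : ℝ, lam ^ 2 - (a + b - z ^ 2 / ((1 - a) * (1 - b))) * lam + a * b = 0 →
        lam = lam₁ ∨ lam = lam₂) ∧
      a ≤ lam₂ ∧ lam₂ ≤ lam₁ ∧ lam₁ ≤ b := by
  have h1a : (0:ℝ) < 1 - a := by linarith
  have h1b : (0:ℝ) < 1 - b := by linarith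
  have hden : (0:ℝ) < (1 - a) * (1 - b) := mul_pos h1a h1b
  have hb0 : (0:ℝ) < b := lt_trans ha hab
  have hsa : Real.sqrt a < Real.sqrt b := Real.sqrt_lt_sqrt ha.le hab
  have hsa0 : 0 < Real.sqrt a := Real.sqrt_pos.2 ha
  have hsab : Real.sqrt (a*b) = Real.sqrt a * Real.sqrt b := Real.sqrt_mul ha.le b
  have hsa2 : Real.sqrt a ^ 2 = a := Real.sq_sqrt ha.le
  have hsb2 : Real.sqrt b ^ 2 = b := Real.sq_sqrt hb0.le
  have hsd2 : Real.sqrt ((1-a)*(1-b)) ^ 2 = (1-a)*(1-b) := Real.sq_sqrt hden.le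
  have hz2 : z ^ 2 ≤ (Real.sqrt b - Real.sqrt a)^2 * ((1-a)*(1-b)) := by
    calc z^2 ≤ ((Real.sqrt b - Real.sqrt a) * Real.sqrt ((1-a)*(1-b)))^2 :=
          pow_le_pow_left₀ hz0 hz 2
      _ = (Real.sqrt b - Real.sqrt a)^2 * ((1-a)*(1-b)) := by rw [mul_pow, hsd2]
  have hq : z^2 / ((1-a)*(1-b)) ≤ a + b - 2 * Real.sqrt (a*b) := by
    rw [div_le_iff₀ hden]
    nlinarith [hz2, hsa2, hsb2, hsab]
  have hq0 : 0 ≤ z^2 / ((1-a)*(1-b)) := div_nonneg (sq_nonneg z) hden.le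
  set s := a + b - z^2 / ((1-a)*(1-b)) with hs
  have hsab0 : 0 < Real.sqrt (a*b) := Real.sqrt_pos.2 (mul_pos ha hb0)
  have hsab2 : Real.sqrt (a*b) ^ 2 = a*b := Real.sq_sqrt (mul_pos ha hb0).le
  have h2s : 2 * Real.sqrt (a*b) ≤ s := by simp only [hs]; linarith
  have hsa' : a < Real.sqrt (a*b) := by nlinarith [hsab, hsa2, hsa, hsa0]
  have hsab' : s ≤ a + b := by simp only [hs]; linarith
  have hD : 0 ≤ s^2 - 4*(a*b) := by nlinarith [h2s, hsab2, hsab0]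
  set r := Real.sqrt (s^2 - 4*(a*b)) with hrdef
  have hr0 : 0 ≤ r := Real.sqrt_nonneg _
  have hr2 : r^2 = s^2 - 4*(a*b) := Real.sq_sqrt hD
  clear_value s r
  refine ⟨h2s, (s+r)/2, (s-r)/2, by linarith, by linear_combination hr2/4,
    by linear_combination hr2/4, ?_, ?_, by linarith, ?_⟩
  · intro lam hlam
    have h : (lam - (s+r)/2) * (lam - (s-r)/2) = 0 := by
      linear_combination hlam - hr2/4
    rcases mul_eq_zero.1 h with h | h
    · left; linarith
    · right; linarith
  · -- a ≤ (s - r)/2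
    have h1 : 0 ≤ s - 2*a := by linarith
    have h2 : r ≤ s - 2*a := by
      have : s^2 - 4*(a*b) ≤ (s - 2*a)^2 := by nlinarith [mul_nonneg ha.le (by linarith : (0:ℝ) ≤ a + b - s)]
      calc r ≤ Real.sqrt ((s-2*a)^2) := hrdef ▸ Real.sqrt_le_sqrt this
        _ = s - 2*a := Real.sqrt_sq h1
    linarith
  · -- (s + r)/2 ≤ b
    have h1 : 0 ≤ 2*b - s := by linarith
    have h2 : r ≤ 2*b - s := by
      have : s^2 - 4*(a*b) ≤ (2*b - s)^2 := by nlinarith [mul_nonneg hb0.le (by linarith : (0:ℝ) ≤ a + b - s)]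
      calc r ≤ Real.sqrt ((2*b-s)^2) := hrdef ▸ Real.sqrt_le_sqrt this
        _ = 2*b - s := Real.sqrt_sq h1
    linarith
end

section
/- Let H and K be complex Hilbert spaces and let A be a bounded operator on H ⊕ K with block form [[A₁₁, A₁₂],[A₁₂*, A₂₂]] where A₁₁ is an operator on H, A₂₂ is an operator on K, and A₁₂ maps K into H (i.e., A(h, k) = (A₁₁h + A₁₂k, A₁₂*h + A₂₂k)). Then A is positive if and only if A₁₁ and A₂₂ are positive and there exists a bounded operator D from K to H with ‖D‖ ≤ 1 such that A₁₂ = A₁₁^{1/2} · D · A₂₂^{1/2}. -/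
/-!
If `A ≥ 0` has square root `B` and `ι₁ : H → H ⊕ K`, `ι₂ : K → H ⊕ K` are the inclusions, the
blocks of `A` are Gram operators: `A₁₁ = (B ι₁)†(B ι₁)`, `A₂₂ = (B ι₂)†(B ι₂)` and
`A₁₂ = (B ι₁)†(B ι₂)`. Hence `‖B ι₁ h‖ = ‖A₁₁^{1/2} h‖`, so by Douglas' factorization
`B ι₁ = W₁ A₁₁^{1/2}` for a contraction `W₁`, likewise `B ι₂ = W₂ A₂₂^{1/2}`, and `D = W₁† W₂`.
Conversely, writing `a = ‖A₁₁^{1/2} h‖`, `b = ‖A₂₂^{1/2} k‖`, one gets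
`⟪A (h, k), (h, k)⟫ = a² + 2 Re ⟪D A₂₂^{1/2} k, A₁₁^{1/2} h⟫ + b² ≥ (a - b)²`.
-/

open ContinuousLinearMap
open scoped InnerProduct InnerProductSpace

namespace ContinuousLinearMap

variable {𝕜 : Type*} [RCLike 𝕜]

theorem exists_norm_le_one_comp_eq_of_norm_apply_le
    {E F G : Type*} [NormedAddCommGroup E] [InnerProductSpace 𝕜 E] [CompleteSpace E]
    [NormedAddCommGroup F] [NormedSpace 𝕜 F] [CompleteSpace F]
    [NormedAddCommGroup G] [NormedSpace 𝕜 G]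
    (S : G →L[𝕜] E) (T : G →L[𝕜] F) (h : ∀ x, ‖T x‖ ≤ ‖S x‖) :
    ∃ W : E →L[𝕜] F, ‖W‖ ≤ 1 ∧ W ∘L S = T := by
  let M := (LinearMap.range (S : G →ₗ[𝕜] E)).topologicalClosure
  let e : G →ₗ[𝕜] M := (S : G →ₗ[𝕜] E).codRestrict M
    fun x => Submodule.le_topologicalClosure _ ⟨x, rfl⟩
  have he : DenseRange e := Subtype.dense_iff.mpr <| by
    rw [← Set.range_comp]
    exact (Submodule.topologicalClosure_coe _).subset
  have hTe : ∀ x, ‖T x‖ ≤ 1 * ‖e x‖ := fun x => (one_mul ‖S x‖).symm ▸ h x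
  let W₀ : M →L[𝕜] F := (T : G →ₗ[𝕜] F).extendOfNorm e
  refine ⟨W₀ ∘L M.orthogonalProjectionOnto, ?_, ?_⟩
  · calc ‖W₀ ∘L M.orthogonalProjectionOnto‖
          ≤ ‖W₀‖ * ‖(M.orthogonalProjectionOnto : E →L[𝕜] M)‖ := opNorm_comp_le _ _
      _ ≤ 1 * 1 := by
          gcongr
          · exact LinearMap.opNorm_extendOfNorm_le he zero_le_one hTe
          · exact M.orthogonalProjectionOnto_norm_le
      _ = 1 := one_mul 1
  · ext x
    have : M.orthogonalProjectionOnto (S x) = e x :=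
      M.orthogonalProjectionOnto_mem_subspace_eq_self (e x)
    rw [comp_apply, comp_apply, this]
    exact LinearMap.extendOfNorm_eq he ⟨1, hTe⟩ x

section Adjoint

variable {E₁ E₂ F G₁ G₂ : Type*}
  [NormedAddCommGroup E₁] [InnerProductSpace 𝕜 E₁] [CompleteSpace E₁]
  [NormedAddCommGroup E₂] [InnerProductSpace 𝕜 E₂] [CompleteSpace E₂]
  [NormedAddCommGroup F] [InnerProductSpace 𝕜 F] [CompleteSpace F]
  [NormedAddCommGroup G₁] [InnerProductSpace 𝕜 G₁] [CompleteSpace G₁]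
  [NormedAddCommGroup G₂] [InnerProductSpace 𝕜 G₂] [CompleteSpace G₂]

theorem norm_apply_eq_of_adjoint_comp_self_eq {S : E₁ →L[𝕜] G₁} {T : E₁ →L[𝕜] F}
    (h : T† ∘L T = S† ∘L S) (x : E₁) : ‖T x‖ = ‖S x‖ := by
  rw [apply_norm_eq_sqrt_inner_adjoint_left, h, ← apply_norm_eq_sqrt_inner_adjoint_left]

theorem exists_norm_le_one_adjoint_comp_eq {X₁ : E₁ →L[𝕜] F} {X₂ : E₂ →L[𝕜] F}
    {R₁ : E₁ →L[𝕜] G₁} {R₂ : E₂ →L[𝕜] G₂}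
    (h₁ : X₁† ∘L X₁ = R₁† ∘L R₁) (h₂ : X₂† ∘L X₂ = R₂† ∘L R₂) :
    ∃ D : G₂ →L[𝕜] G₁, ‖D‖ ≤ 1 ∧ X₁† ∘L X₂ = R₁† ∘L D ∘L R₂ := by
  obtain ⟨W₁, hW₁, rfl⟩ := exists_norm_le_one_comp_eq_of_norm_apply_le R₁ X₁
    fun x => (norm_apply_eq_of_adjoint_comp_self_eq h₁ x).le
  obtain ⟨W₂, hW₂, rfl⟩ := exists_norm_le_one_comp_eq_of_norm_apply_le R₂ X₂
    fun x => (norm_apply_eq_of_adjoint_comp_self_eq h₂ x).le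
  refine ⟨W₁† ∘L W₂, ?_, by rw [adjoint_comp]; rfl⟩
  calc ‖W₁† ∘L W₂‖ ≤ ‖W₁†‖ * ‖W₂‖ := opNorm_comp_le _ _
    _ = ‖W₁‖ * ‖W₂‖ := by rw [LinearIsometryEquiv.norm_map]
    _ ≤ 1 := mul_le_one₀ hW₁ (norm_nonneg _) hW₂

end Adjoint

section Sqrt

variable {E : Type*} [NormedAddCommGroup E] [InnerProductSpace ℂ E] [CompleteSpace E]

theorem adjoint_cfc_sqrt (a : E →L[ℂ] E) : (cfc Real.sqrt a)† = cfc Real.sqrt a :=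
  (cfc_predicate Real.sqrt a : IsSelfAdjoint _).adjoint_eq

theorem IsPositive.cfc_sqrt_comp_self {a : E →L[ℂ] E} (ha : a.IsPositive) :
    cfc Real.sqrt a ∘L cfc Real.sqrt a = a := by
  have ha' : 0 ≤ a := (nonneg_iff_isPositive a).mpr ha
  rw [← mul_def, ← cfc_mul .., cfc_congr (g := id), cfc_id ℝ a]
  exact fun x hx => Real.mul_self_sqrt (spectrum_nonneg_of_nonneg ha' hx)

theorem IsPositive.adjoint_cfc_sqrt_comp_self {a : E →L[ℂ] E} (ha : a.IsPositive) :
    (cfc Real.sqrt a)† ∘L cfc Real.sqrt a = a := by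
  rw [adjoint_cfc_sqrt, ha.cfc_sqrt_comp_self]

theorem IsPositive.inner_apply_self_eq_norm_cfc_sqrt_sq {a : E →L[ℂ] E} (ha : a.IsPositive)
    (x : E) : ⟪a x, x⟫_ℂ = (‖cfc Real.sqrt a x‖ ^ 2 : ℝ) := by
  conv_lhs => rw [← ha.adjoint_cfc_sqrt_comp_self]
  rw [comp_apply, adjoint_inner_left, inner_self_eq_norm_sq_to_K]
  norm_cast

theorem IsPositive.adjoint_cfc_sqrt_comp_comp_cfc_sqrt_comp {F G : Type*}
    [NormedAddCommGroup F] [InnerProductSpace ℂ F] [CompleteSpace F]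
    [NormedAddCommGroup G] [InnerProductSpace ℂ G] [CompleteSpace G]
    {a : E →L[ℂ] E} (ha : a.IsPositive) (S : F →L[ℂ] E) (T : G →L[ℂ] E) :
    (cfc Real.sqrt a ∘L S)† ∘L (cfc Real.sqrt a ∘L T) = S† ∘L a ∘L T := by
  conv_rhs => rw [← ha.adjoint_cfc_sqrt_comp_self]
  rw [adjoint_comp]
  rfl

end Sqrt

end ContinuousLinearMap

namespace WithLp

variable {𝕜 : Type*} [RCLike 𝕜] {H K : Type*}
  [NormedAddCommGroup H] [InnerProductSpace 𝕜 H] [CompleteSpace H]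
  [NormedAddCommGroup K] [InnerProductSpace 𝕜 K] [CompleteSpace K]

@[simp]
theorem adjoint_fstL_apply (h : H) : ((fstL 2 𝕜 H K)†) h = toLp 2 (h, 0) := by
  refine ext_inner_left 𝕜 fun x => ?_
  simp [adjoint_inner_right]

@[simp]
theorem adjoint_sndL_apply (k : K) : ((sndL 2 𝕜 H K)†) k = toLp 2 (0, k) := by
  refine ext_inner_left 𝕜 fun x => ?_
  simp [adjoint_inner_right]

end WithLp

section BlockForm

variable {𝕜 : Type*} [RCLike 𝕜] {H K : Type*}
  [NormedAddCommGroup H] [InnerProductSpace 𝕜 H] [CompleteSpace H]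
  [NormedAddCommGroup K] [InnerProductSpace 𝕜 K] [CompleteSpace K]

def HasBlockForm (A : WithLp 2 (H × K) →L[𝕜] WithLp 2 (H × K)) (A₁₁ : H →L[𝕜] H)
    (A₁₂ : K →L[𝕜] H) (A₂₂ : K →L[𝕜] K) : Prop :=
  ∀ h k, A (WithLp.toLp 2 (h, k)) = WithLp.toLp 2 (A₁₁ h + A₁₂ k, (A₁₂†) h + A₂₂ k)

namespace HasBlockForm

variable {A : WithLp 2 (H × K) →L[𝕜] WithLp 2 (H × K)} {A₁₁ : H →L[𝕜] H} {A₁₂ : K →L[𝕜] H}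
  {A₂₂ : K →L[𝕜] K}

theorem fstL_comp_comp_adjoint_fstL (hA : HasBlockForm A A₁₁ A₁₂ A₂₂) :
    WithLp.fstL 2 𝕜 H K ∘L A ∘L (WithLp.fstL 2 𝕜 H K)† = A₁₁ := by
  ext h; simp [hA h 0]

theorem sndL_comp_comp_adjoint_sndL (hA : HasBlockForm A A₁₁ A₁₂ A₂₂) :
    WithLp.sndL 2 𝕜 H K ∘L A ∘L (WithLp.sndL 2 𝕜 H K)† = A₂₂ := by
  ext k; simp [hA 0 k]

theorem fstL_comp_comp_adjoint_sndL (hA : HasBlockForm A A₁₁ A₁₂ A₂₂) :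
    WithLp.fstL 2 𝕜 H K ∘L A ∘L (WithLp.sndL 2 𝕜 H K)† = A₁₂ := by
  ext k; simp [hA 0 k]

theorem inner_apply_self (hA : HasBlockForm A A₁₁ A₁₂ A₂₂) (x : WithLp 2 (H × K)) :
    ⟪A x, x⟫_𝕜 = ⟪A₁₁ x.fst, x.fst⟫_𝕜 + ⟪A₁₂ x.snd, x.fst⟫_𝕜 + ⟪x.fst, A₁₂ x.snd⟫_𝕜
      + ⟪A₂₂ x.snd, x.snd⟫_𝕜 := by
  obtain ⟨x₁, x₂⟩ := x
  simp only [hA x₁ x₂, WithLp.prod_inner_apply, inner_add_left, adjoint_inner_left,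
    WithLp.toLp_fst, WithLp.toLp_snd]
  ring

end HasBlockForm

end BlockForm

namespace HasBlockForm

variable {H K : Type*}
  [NormedAddCommGroup H] [InnerProductSpace ℂ H] [CompleteSpace H]
  [NormedAddCommGroup K] [InnerProductSpace ℂ K] [CompleteSpace K]
  {A : WithLp 2 (H × K) →L[ℂ] WithLp 2 (H × K)} {A₁₁ : H →L[ℂ] H} {A₁₂ : K →L[ℂ] H}
  {A₂₂ : K →L[ℂ] K}

theorem isPositive_fst (hA : HasBlockForm A A₁₁ A₁₂ A₂₂) (hpos : A.IsPositive) :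
    A₁₁.IsPositive :=
  hA.fstL_comp_comp_adjoint_fstL ▸ hpos.conj_adjoint _

theorem isPositive_snd (hA : HasBlockForm A A₁₁ A₁₂ A₂₂) (hpos : A.IsPositive) :
    A₂₂.IsPositive :=
  hA.sndL_comp_comp_adjoint_sndL ▸ hpos.conj_adjoint _

theorem exists_eq_cfc_sqrt_comp_comp_cfc_sqrt (hA : HasBlockForm A A₁₁ A₁₂ A₂₂)
    (hpos : A.IsPositive) :
    ∃ D : K →L[ℂ] H, ‖D‖ ≤ 1 ∧ A₁₂ = cfc Real.sqrt A₁₁ ∘L D ∘L cfc Real.sqrt A₂₂ := by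
  let ι₁ := (WithLp.fstL 2 ℂ H K)†
  let ι₂ := (WithLp.sndL 2 ℂ H K)†
  obtain ⟨D, hD, hD₁₂⟩ := exists_norm_le_one_adjoint_comp_eq
    (X₁ := cfc Real.sqrt A ∘L ι₁) (X₂ := cfc Real.sqrt A ∘L ι₂)
    (R₁ := cfc Real.sqrt A₁₁) (R₂ := cfc Real.sqrt A₂₂)
    (by rw [hpos.adjoint_cfc_sqrt_comp_comp_cfc_sqrt_comp, adjoint_adjoint,
      hA.fstL_comp_comp_adjoint_fstL, (hA.isPositive_fst hpos).adjoint_cfc_sqrt_comp_self])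
    (by rw [hpos.adjoint_cfc_sqrt_comp_comp_cfc_sqrt_comp, adjoint_adjoint,
      hA.sndL_comp_comp_adjoint_sndL, (hA.isPositive_snd hpos).adjoint_cfc_sqrt_comp_self])
  refine ⟨D, hD, ?_⟩
  rw [← hA.fstL_comp_comp_adjoint_sndL, ← adjoint_adjoint (WithLp.fstL 2 ℂ H K),
    ← hpos.adjoint_cfc_sqrt_comp_comp_cfc_sqrt_comp, hD₁₂, adjoint_cfc_sqrt]

theorem isPositive_of_eq_cfc_sqrt_comp_comp_cfc_sqrt (hA : HasBlockForm A A₁₁ A₁₂ A₂₂)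
    (h₁₁ : A₁₁.IsPositive) (h₂₂ : A₂₂.IsPositive) {D : K →L[ℂ] H} (hD : ‖D‖ ≤ 1)
    (h₁₂ : A₁₂ = cfc Real.sqrt A₁₁ ∘L D ∘L cfc Real.sqrt A₂₂) : A.IsPositive := by
  rw [isPositive_iff_complex]
  intro x
  set a := ‖cfc Real.sqrt A₁₁ x.fst‖
  set b := ‖cfc Real.sqrt A₂₂ x.snd‖
  set w := ⟪D (cfc Real.sqrt A₂₂ x.snd), cfc Real.sqrt A₁₁ x.fst⟫_ℂ
  have h_cross : ⟪A₁₂ x.snd, x.fst⟫_ℂ = w := by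
    rw [h₁₂, comp_apply, comp_apply, ← adjoint_inner_right, adjoint_cfc_sqrt]
  have h_quad : ⟪A x, x⟫_ℂ = (a ^ 2 + 2 * w.re + b ^ 2 : ℝ) := by
    rw [hA.inner_apply_self, ← inner_conj_symm x.fst, h_cross, add_assoc _ w, Complex.add_conj,
      h₁₁.inner_apply_self_eq_norm_cfc_sqrt_sq, h₂₂.inner_apply_self_eq_norm_cfc_sqrt_sq]
    push_cast
    ring
  have h_bound : |w.re| ≤ b * a := calc
    |w.re| ≤ ‖w‖ := Complex.abs_re_le_norm w
    _ ≤ ‖D (cfc Real.sqrt A₂₂ x.snd)‖ * a := norm_inner_le_norm _ _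
    _ ≤ b * a := by
      gcongr
      simpa using D.le_of_opNorm_le hD (cfc Real.sqrt A₂₂ x.snd)
  rw [h_quad, RCLike.re_to_complex, Complex.ofReal_re]
  exact ⟨rfl, by nlinarith [abs_le.mp h_bound, sq_nonneg (a - b)]⟩

end HasBlockForm

/-- A block operator `[[A₁₁, A₁₂],[A₁₂*, A₂₂]]` on `H ⊕ K` is positive if
and only if `A₁₁` and `A₂₂` are positive and `A₁₂ = A₁₁^{1/2} D A₂₂^{1/2}` for some
contraction `D : K → H`.  (Here the positive square root is given by the continuous
functional calculus applied to `Real.sqrt`.) -/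
theorem block_operator_positive_iff
    {H K : Type*} [NormedAddCommGroup H] [InnerProductSpace ℂ H] [CompleteSpace H]
    [NormedAddCommGroup K] [InnerProductSpace ℂ K] [CompleteSpace K]
    (A₁₁ : H →L[ℂ] H) (A₂₂ : K →L[ℂ] K) (A₁₂ : K →L[ℂ] H)
    (A : WithLp 2 (H × K) →L[ℂ] WithLp 2 (H × K))
    (hA : ∀ (h : H) (k : K), A ((WithLp.equiv 2 (H × K)).symm (h, k)) =
        (WithLp.equiv 2 (H × K)).symm
          (A₁₁ h + A₁₂ k, (ContinuousLinearMap.adjoint A₁₂) h + A₂₂ k)) :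
    A.IsPositive ↔
      A₁₁.IsPositive ∧ A₂₂.IsPositive ∧
        ∃ D : K →L[ℂ] H, ‖D‖ ≤ 1 ∧
          A₁₂ = (cfc Real.sqrt A₁₁) ∘L D ∘L (cfc Real.sqrt A₂₂) := by
  have hA : HasBlockForm A A₁₁ A₁₂ A₂₂ := hA
  constructor
  · intro hpos
    exact ⟨hA.isPositive_fst hpos, hA.isPositive_snd hpos,
      hA.exists_eq_cfc_sqrt_comp_comp_cfc_sqrt hpos⟩
  · rintro ⟨h₁₁, h₂₂, D, hD, h₁₂⟩
    exact hA.isPositive_of_eq_cfc_sqrt_comp_comp_cfc_sqrt h₁₁ h₂₂ hD h₁₂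
end
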